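/- arXiv:1807.06037 — 3 statements merged into one kernel-verified Lean document; each statement's English description precedes it below -/
import Mathlib

section
/- Given a special deformation retract: chain maps i : W → V, p : V → W and a degree −1 map h : V → V with p∘i = 1_W, i∘p − 1_V = d_V∘h + h∘d_V, h∘i = 0, p∘h = 0, h∘h = 0, and a perturbation δ of d_V (i.e., (d_V + δ)² = 0) such that (1 − δh) is invertible, the perturbed differential d'_W := d_W + p(1 − δh)^{-1}δ i on W satisfies (d'_W)² = 0. -/
/-!
Put `Φ = (1 - δh)⁻¹ δ`, the perturbation transferred along `h`. The two expansions
`(1 - δh)⁻¹ = 1 + Φh` and `Φ = δ (1 + hΦ)` turn `dΦ + Φd + Φ (1 + dh + hd) Φ` into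
`(1 + Φh) (dδ + δd + δ²) (1 + hΦ)`, which vanishes because `δ` is a perturbation of `d`.
Since `ip = 1 + dh + hd` and `i`, `p` are chain maps, `(d_W + pΦi)²` is `p` applied to this
expression, composed with `i`.
-/

theorem mul_add_mul_add_mul_self_eq_zero {R : Type*} [Ring R] {d δ : R}
    (hd : d * d = 0) (hpert : (d + δ) * (d + δ) = 0) :
    d * δ + δ * d + δ * δ = 0 := by
  calc d * δ + δ * d + δ * δ = (d + δ) * (d + δ) - d * d := by noncomm_ring
    _ = 0 := by rw [hpert, hd, sub_zero]

theorem perturbed_maurerCartan {R : Type*} [Ring R] {d δ h A : R}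
    (hd : d * d = 0) (hpert : (d + δ) * (d + δ) = 0)
    (hA₁ : A * (1 - δ * h) = 1) (hA₂ : (1 - δ * h) * A = 1) :
    d * (A * δ) + A * δ * d + A * δ * (1 + d * h + h * d) * (A * δ) = 0 := by
  have hA : A = 1 + A * δ * h := by
    calc A = A * (1 - δ * h) + A * δ * h := by noncomm_ring
      _ = 1 + A * δ * h := by rw [hA₁]
  have hAδ : A * δ = δ * (1 + h * (A * δ)) := by
    calc A * δ = (1 - δ * h) * A * δ + δ * (h * (A * δ)) := by noncomm_ring
      _ = δ * (1 + h * (A * δ)) := by rw [hA₂]; noncomm_ring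
  calc d * (A * δ) + A * δ * d + A * δ * (1 + d * h + h * d) * (A * δ)
      = (1 + A * δ * h) * d * (A * δ) + A * δ * d * (1 + h * (A * δ)) + A * δ * (A * δ) := by
        noncomm_ring
    _ = A * d * (δ * (1 + h * (A * δ))) + A * δ * d * (1 + h * (A * δ))
          + A * δ * (δ * (1 + h * (A * δ))) := by
        rw [← hA, ← hAδ]
    _ = A * (d * δ + δ * d + δ * δ) * (1 + h * (A * δ)) := by noncomm_ring
    _ = 0 := by rw [mul_add_mul_add_mul_self_eq_zero hd hpert, mul_zero, zero_mul]

theorem transferred_differential_comp_self {R V W : Type*} [Semiring R]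
    [AddCommMonoid V] [Module R V] [AddCommMonoid W] [Module R W]
    {dV Φ : V →ₗ[R] V} {dW : W →ₗ[R] W} {i : W →ₗ[R] V} {p : V →ₗ[R] W}
    (hdW : dW ∘ₗ dW = 0) (hchain_i : dV ∘ₗ i = i ∘ₗ dW) (hchain_p : dW ∘ₗ p = p ∘ₗ dV) :
    (dW + p ∘ₗ Φ ∘ₗ i) ∘ₗ (dW + p ∘ₗ Φ ∘ₗ i) =
      p ∘ₗ (dV * Φ + Φ * dV + Φ * (i ∘ₗ p) * Φ) ∘ₗ i := by
  simp only [Module.End.mul_eq_comp, LinearMap.add_comp, LinearMap.comp_add, LinearMap.comp_assoc,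
    hdW, zero_add]
  have hpull : ∀ f : W →ₗ[R] V, dW ∘ₗ p ∘ₗ f = p ∘ₗ dV ∘ₗ f := fun f => by
    rw [← LinearMap.comp_assoc, hchain_p, LinearMap.comp_assoc]
  rw [hpull, ← hchain_i]
  abel

theorem stmt_4_general (K V W : Type) [Field K]
    [AddCommGroup V] [Module K V] [AddCommGroup W] [Module K W]
    (dV h δ A : V →ₗ[K] V) (dW : W →ₗ[K] W) (i : W →ₗ[K] V) (p : V →ₗ[K] W)
    (hdV : dV ∘ₗ dV = 0) (hdW : dW ∘ₗ dW = 0)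
    (hchain_i : dV ∘ₗ i = i ∘ₗ dW) (hchain_p : dW ∘ₗ p = p ∘ₗ dV)
    (hip : i ∘ₗ p - LinearMap.id = dV ∘ₗ h + h ∘ₗ dV)
    (hpert : (dV + δ) ∘ₗ (dV + δ) = 0)
    (hA₁ : A ∘ₗ (LinearMap.id - δ ∘ₗ h) = LinearMap.id)
    (hA₂ : (LinearMap.id - δ ∘ₗ h) ∘ₗ A = LinearMap.id) :
    (dW + p ∘ₗ A ∘ₗ δ ∘ₗ i) ∘ₗ (dW + p ∘ₗ A ∘ₗ δ ∘ₗ i) = 0 := by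
  have hip' : i ∘ₗ p = 1 + dV * h + h * dV := by
    rw [add_assoc, ← sub_eq_iff_eq_add']
    exact hip
  have key := perturbed_maurerCartan (R := Module.End K V) hdV hpert hA₁ hA₂
  rw [← hip'] at key
  refine (transferred_differential_comp_self (Φ := A * δ) hdW hchain_i hchain_p).trans ?_
  rw [key, LinearMap.zero_comp, LinearMap.comp_zero]

/-- Homological Perturbation Lemma, differential part:
Given a special deformation retract `(i, p, h)` between chain complexes `(V, dV)` and
`(W, dW)` (with `p∘i = 1`, `i∘p - 1 = dV∘h + h∘dV`, `h∘i = 0`, `p∘h = 0`, `h∘h = 0`)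
and a perturbation `δ` (i.e. `(dV + δ)² = 0`) with `1 - δ∘h` invertible (with inverse `A`),
the perturbed differential `d'_W = dW + p∘A∘δ∘i` satisfies `(d'_W)² = 0`. -/
theorem stmt_4 (K V W : Type) [Field K]
    [AddCommGroup V] [Module K V] [AddCommGroup W] [Module K W]
    (dV h δ A : V →ₗ[K] V) (dW : W →ₗ[K] W) (i : W →ₗ[K] V) (p : V →ₗ[K] W)
    (hdV : dV ∘ₗ dV = 0) (hdW : dW ∘ₗ dW = 0)
    (hchain_i : dV ∘ₗ i = i ∘ₗ dW) (hchain_p : dW ∘ₗ p = p ∘ₗ dV)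
    (hpi : p ∘ₗ i = LinearMap.id)
    (hip : i ∘ₗ p - LinearMap.id = dV ∘ₗ h + h ∘ₗ dV)
    (hhi : h ∘ₗ i = 0) (hph : p ∘ₗ h = 0) (hhh : h ∘ₗ h = 0)
    (hpert : (dV + δ) ∘ₗ (dV + δ) = 0)
    (hA₁ : A ∘ₗ (LinearMap.id - δ ∘ₗ h) = LinearMap.id)
    (hA₂ : (LinearMap.id - δ ∘ₗ h) ∘ₗ A = LinearMap.id) :
    (dW + p ∘ₗ A ∘ₗ δ ∘ₗ i) ∘ₗ (dW + p ∘ₗ A ∘ₗ δ ∘ₗ i) = 0 :=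
  stmt_4_general K V W dV h δ A dW i p hdV hdW hchain_i hchain_p hip hpert hA₁ hA₂
end

section
/- Under the hypotheses of the homological perturbation lemma for a special deformation retract, the perturbed maps p' = p + p(1 − δh)^{-1}δh, i' = i + h(1 − δh)^{-1}δ i, h' = h + h(1 − δh)^{-1}δh, and d'_W = d_W + p(1 − δh)^{-1}δ i satisfy: p' is a chain map from (V, d_V+δ) to (W, d'_W), i' is a chain map in the other direction, p'∘i' = 1_W, and i'∘p' − 1_V = (d_V+δ)∘h' + h'∘(d_V+δ). -/
/-!
Put `x = (1 - δh)⁻¹δ`, so that `p' = p + pxh`, `i' = i + hxi`, `h' = h + hxh` and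
`d'_W = d_W + pxi`. Since `x` is also `δ(1 - hδ)⁻¹`, conjugating by `1 - δh` and `1 - hδ` turns
`(d_V + δ)² = 0` into the Maurer–Cartan equation `d_V x + x d_V + x (i p) x = 0`. Expanding each of
the four claims with the side conditions and `i p = 1 + d_V h + h d_V`, what is left over is this
expression sandwiched between `p` or `h` on the left and `h` or `i` on the right.
-/

namespace HomologicalPerturbation

section Ring

variable {S : Type*} [Ring S] {a x d δ h : S}

theorem mul_mul_mul_eq_sub_of_one_sub_mul_mul_eq_one (ha : (1 - δ * h) * a = 1) :
    δ * h * (a * δ) = a * δ - δ :=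
  calc δ * h * (a * δ) = a * δ - (1 - δ * h) * a * δ := by noncomm_ring
    _ = a * δ - δ := by rw [ha, one_mul]

theorem mul_mul_mul_eq_sub_of_mul_one_sub_mul_eq_one (ha : a * (1 - δ * h) = 1) :
    a * δ * h * δ = a * δ - δ :=
  calc a * δ * h * δ = a * δ - a * (1 - δ * h) * δ := by noncomm_ring
    _ = a * δ - δ := by rw [ha, one_mul]

theorem maurerCartan (hL : δ * h * x = x - δ) (hR : x * h * δ = x - δ) (hd : d * d = 0)
    (hdδ : (d + δ) * (d + δ) = 0) :
    d * x + x * d + x * (1 + d * h + h * d) * x = 0 := by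
  have hL' : (1 - δ * h) * x = δ := by rw [sub_mul, one_mul, hL, sub_sub_cancel]
  have hR' : x * (1 - h * δ) = δ := by rw [mul_sub, mul_one, ← mul_assoc, hR, sub_sub_cancel]
  have hconj : (1 - δ * h) * (d * x + x * d + x * (1 + d * h + h * d) * x) * (1 - h * δ) = 0 :=
    calc _ = (1 - δ * h) * d * (x * (1 - h * δ)) + (1 - δ * h) * x * d * (1 - h * δ)
          + (1 - δ * h) * x * (1 + d * h + h * d) * (x * (1 - h * δ)) := by noncomm_ring
      _ = (d + δ) * (d + δ) - d * d := by rw [hL', hR']; noncomm_ring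
      _ = 0 := by rw [hdδ, hd, sub_zero]
  have hleft : (1 + x * h) * (1 - δ * h) = 1 :=
    calc _ = 1 + (x * (1 - h * δ) - δ) * h := by noncomm_ring
      _ = 1 := by rw [hR', sub_self, zero_mul, add_zero]
  have hright : (1 - h * δ) * (1 + h * x) = 1 :=
    calc _ = 1 + h * ((1 - δ * h) * x - δ) := by noncomm_ring
      _ = 1 := by rw [hL', sub_self, mul_zero, add_zero]
  calc _ = (1 + x * h) * (1 - δ * h) * (d * x + x * d + x * (1 + d * h + h * d) * x)
        * ((1 - h * δ) * (1 + h * x)) := by rw [hleft, hright, one_mul, mul_one]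
    _ = (1 + x * h) * ((1 - δ * h) * (d * x + x * d + x * (1 + d * h + h * d) * x)
        * (1 - h * δ)) * (1 + h * x) := by simp only [mul_assoc]
    _ = 0 := by rw [hconj, mul_zero, zero_mul]

end Ring

section LinearMap

variable {R V W : Type*} [Semiring R] [AddCommGroup V] [Module R V] [AddCommGroup W] [Module R W]

def perturbedProj (p : V →ₗ[R] W) (x h : V →ₗ[R] V) : V →ₗ[R] W := p + p ∘ₗ x ∘ₗ h

def perturbedIncl (i : W →ₗ[R] V) (x h : V →ₗ[R] V) : W →ₗ[R] V := i + h ∘ₗ x ∘ₗ i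

def perturbedHomotopy (x h : V →ₗ[R] V) : V →ₗ[R] V := h + h ∘ₗ x ∘ₗ h

def perturbedDifferential (dW : W →ₗ[R] W) (p : V →ₗ[R] W) (x : V →ₗ[R] V) (i : W →ₗ[R] V) :
    W →ₗ[R] W :=
  dW + p ∘ₗ x ∘ₗ i

variable {d δ h x : V →ₗ[R] V} {dW : W →ₗ[R] W} {i : W →ₗ[R] V} {p : V →ₗ[R] W}

theorem perturbedProj_comp_perturbedIncl (hpi : p ∘ₗ i = LinearMap.id) (hhi : h ∘ₗ i = 0)
    (hph : p ∘ₗ h = 0) (hhh : h ∘ₗ h = 0) :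
    perturbedProj p x h ∘ₗ perturbedIncl i x h = LinearMap.id := by
  ext w
  have hpi w : p (i w) = w := congr($hpi w)
  have hhi w : h (i w) = 0 := congr($hhi w)
  have hph v : p (h v) = 0 := congr($hph v)
  have hhh v : h (h v) = 0 := congr($hhh v)
  simp [perturbedProj, perturbedIncl, hpi, hhi, hph, hhh]

variable (hip : i ∘ₗ p = LinearMap.id + d ∘ₗ h + h ∘ₗ d)
  (hMC : d ∘ₗ x + x ∘ₗ d + x ∘ₗ (i ∘ₗ p) ∘ₗ x = 0)
include hip hMC

theorem perturbedProj_comp_add (hchain : dW ∘ₗ p = p ∘ₗ d) (hR : x ∘ₗ h ∘ₗ δ = x - δ) :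
    perturbedProj p x h ∘ₗ (d + δ) =
      perturbedDifferential dW p x i ∘ₗ perturbedProj p x h := by
  ext v
  have hip v : i (p v) = v + d (h v) + h (d v) := congr($hip v)
  have hchain v : dW (p v) = p (d v) := congr($hchain v)
  have hR v : x (h (δ v)) = x v - δ v := congr($hR v)
  have hMC := congr(p ($hMC (h v)))
  simp only [perturbedProj, perturbedDifferential, LinearMap.add_apply, LinearMap.comp_apply,
    LinearMap.zero_apply, map_add, map_sub, map_zero, hchain, hip, hR] at hMC ⊢
  linear_combination (norm := module) -hMC

theorem add_comp_perturbedIncl (hchain : d ∘ₗ i = i ∘ₗ dW) (hL : δ ∘ₗ h ∘ₗ x = x - δ) :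
    (d + δ) ∘ₗ perturbedIncl i x h =
      perturbedIncl i x h ∘ₗ perturbedDifferential dW p x i := by
  ext w
  have hip v : i (p v) = v + d (h v) + h (d v) := congr($hip v)
  have hchain w : d (i w) = i (dW w) := congr($hchain w)
  have hL v : δ (h (x v)) = x v - δ v := congr($hL v)
  have hMC := congr(h ($hMC (i w)))
  simp only [perturbedIncl, perturbedDifferential, LinearMap.add_apply, LinearMap.comp_apply,
    LinearMap.zero_apply, map_add, map_zero, hchain, hip, hL] at hMC ⊢
  linear_combination (norm := module) -hMC

theorem perturbedIncl_comp_perturbedProj_sub_id (hL : δ ∘ₗ h ∘ₗ x = x - δ)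
    (hR : x ∘ₗ h ∘ₗ δ = x - δ) :
    perturbedIncl i x h ∘ₗ perturbedProj p x h - LinearMap.id =
      (d + δ) ∘ₗ perturbedHomotopy x h + perturbedHomotopy x h ∘ₗ (d + δ) := by
  ext v
  have hip v : i (p v) = v + d (h v) + h (d v) := congr($hip v)
  have hL v : δ (h (x v)) = x v - δ v := congr($hL v)
  have hR v : x (h (δ v)) = x v - δ v := congr($hR v)
  have hMC := congr(h ($hMC (h v)))
  simp only [perturbedIncl, perturbedProj, perturbedHomotopy, LinearMap.add_apply,
    LinearMap.sub_apply, LinearMap.comp_apply, LinearMap.id_apply, LinearMap.zero_apply, map_add,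
    map_sub, map_zero, hip, hL, hR] at hMC ⊢
  linear_combination (norm := module) hMC

end LinearMap

end HomologicalPerturbation

open HomologicalPerturbation

theorem stmt_5_general (K V W : Type) [Field K]
    [AddCommGroup V] [Module K V] [AddCommGroup W] [Module K W]
    (dV h δ A : V →ₗ[K] V) (dW : W →ₗ[K] W) (i : W →ₗ[K] V) (p : V →ₗ[K] W)
    (hdV : dV ∘ₗ dV = 0)
    (hchain_i : dV ∘ₗ i = i ∘ₗ dW) (hchain_p : dW ∘ₗ p = p ∘ₗ dV)
    (hpi : p ∘ₗ i = LinearMap.id)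
    (hip : i ∘ₗ p - LinearMap.id = dV ∘ₗ h + h ∘ₗ dV)
    (hhi : h ∘ₗ i = 0) (hph : p ∘ₗ h = 0) (hhh : h ∘ₗ h = 0)
    (hpert : (dV + δ) ∘ₗ (dV + δ) = 0)
    (hA₁ : A ∘ₗ (LinearMap.id - δ ∘ₗ h) = LinearMap.id)
    (hA₂ : (LinearMap.id - δ ∘ₗ h) ∘ₗ A = LinearMap.id)
    (p' : V →ₗ[K] W) (i' : W →ₗ[K] V) (h' : V →ₗ[K] V) (dW' : W →ₗ[K] W)
    (hp' : p' = p + p ∘ₗ A ∘ₗ δ ∘ₗ h)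
    (hi' : i' = i + h ∘ₗ A ∘ₗ δ ∘ₗ i)
    (hh' : h' = h + h ∘ₗ A ∘ₗ δ ∘ₗ h)
    (hdW' : dW' = dW + p ∘ₗ A ∘ₗ δ ∘ₗ i) :
    p' ∘ₗ (dV + δ) = dW' ∘ₗ p' ∧
    (dV + δ) ∘ₗ i' = i' ∘ₗ dW' ∧
    p' ∘ₗ i' = LinearMap.id ∧
    i' ∘ₗ p' - LinearMap.id = (dV + δ) ∘ₗ h' + h' ∘ₗ (dV + δ) := by
  have hL : δ ∘ₗ h ∘ₗ (A ∘ₗ δ) = A ∘ₗ δ - δ := mul_mul_mul_eq_sub_of_one_sub_mul_mul_eq_one hA₂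
  have hR : (A ∘ₗ δ) ∘ₗ h ∘ₗ δ = A ∘ₗ δ - δ := mul_mul_mul_eq_sub_of_mul_one_sub_mul_eq_one hA₁
  have hip_eq : i ∘ₗ p = LinearMap.id + dV ∘ₗ h + h ∘ₗ dV := by
    rw [add_assoc, ← hip, add_sub_cancel]
  have hMC : dV ∘ₗ (A ∘ₗ δ) + (A ∘ₗ δ) ∘ₗ dV + (A ∘ₗ δ) ∘ₗ (i ∘ₗ p) ∘ₗ (A ∘ₗ δ) = 0 := by
    rw [hip_eq]
    exact maurerCartan hL hR hdV hpert
  subst hp' hi' hh' hdW'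
  exact ⟨perturbedProj_comp_add (x := A ∘ₗ δ) hip_eq hMC hchain_p hR,
    add_comp_perturbedIncl (x := A ∘ₗ δ) hip_eq hMC hchain_i hL,
    perturbedProj_comp_perturbedIncl (x := A ∘ₗ δ) hpi hhi hph hhh,
    perturbedIncl_comp_perturbedProj_sub_id (x := A ∘ₗ δ) hip_eq hMC hL hR⟩

/-- Homological Perturbation Lemma, full form: under the hypotheses of
the perturbation lemma for an SDR, the perturbed maps
`p' = p + p(1-δh)⁻¹δh`, `i' = i + h(1-δh)⁻¹δi`, `h' = h + h(1-δh)⁻¹δh`,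
`d'_W = dW + p(1-δh)⁻¹δi` satisfy: `p'` is a chain map `(V, dV+δ) → (W, d'_W)`,
`i'` is a chain map in the other direction, `p'∘i' = 1_W`, and
`i'∘p' - 1_V = (dV+δ)∘h' + h'∘(dV+δ)`. -/
theorem stmt_5 (K V W : Type) [Field K]
    [AddCommGroup V] [Module K V] [AddCommGroup W] [Module K W]
    (dV h δ A : V →ₗ[K] V) (dW : W →ₗ[K] W) (i : W →ₗ[K] V) (p : V →ₗ[K] W)
    (hdV : dV ∘ₗ dV = 0) (hdW : dW ∘ₗ dW = 0)
    (hchain_i : dV ∘ₗ i = i ∘ₗ dW) (hchain_p : dW ∘ₗ p = p ∘ₗ dV)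
    (hpi : p ∘ₗ i = LinearMap.id)
    (hip : i ∘ₗ p - LinearMap.id = dV ∘ₗ h + h ∘ₗ dV)
    (hhi : h ∘ₗ i = 0) (hph : p ∘ₗ h = 0) (hhh : h ∘ₗ h = 0)
    (hpert : (dV + δ) ∘ₗ (dV + δ) = 0)
    (hA₁ : A ∘ₗ (LinearMap.id - δ ∘ₗ h) = LinearMap.id)
    (hA₂ : (LinearMap.id - δ ∘ₗ h) ∘ₗ A = LinearMap.id)
    (p' : V →ₗ[K] W) (i' : W →ₗ[K] V) (h' : V →ₗ[K] V) (dW' : W →ₗ[K] W)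
    (hp' : p' = p + p ∘ₗ A ∘ₗ δ ∘ₗ h)
    (hi' : i' = i + h ∘ₗ A ∘ₗ δ ∘ₗ i)
    (hh' : h' = h + h ∘ₗ A ∘ₗ δ ∘ₗ h)
    (hdW' : dW' = dW + p ∘ₗ A ∘ₗ δ ∘ₗ i) :
    p' ∘ₗ (dV + δ) = dW' ∘ₗ p' ∧
    (dV + δ) ∘ₗ i' = i' ∘ₗ dW' ∧
    p' ∘ₗ i' = LinearMap.id ∧
    i' ∘ₗ p' - LinearMap.id = (dV + δ) ∘ₗ h' + h' ∘ₗ (dV + δ) :=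
  stmt_5_general K V W dV h δ A dW i p hdV hchain_i hchain_p hpi hip hhi hph hhh hpert hA₁ hA₂ p' i'
    h' dW' hp' hi' hh' hdW'
end

section
/- Let (h, i, p) be a special deformation retract between chain complexes (V, d_V) and (W, d_W). Define on the n-fold tensor powers the maps T^n i = i^{⊗n}, T^n p = p^{⊗n}, T^n d = Σ_{j=0}^{n-1} 1^{⊗j} ⊗ d_V ⊗ 1^{⊗(n-1-j)}, and T^n h = Σ_{j=0}^{n-1} 1^{⊗j} ⊗ h ⊗ (i∘p)^{⊗(n-1-j)}. Then T^n d ∘ T^n h + T^n h ∘ T^n d = (i∘p)^{⊗n} − 1^{⊗n}. -/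
/-!
Expanding the products, `Tⁿd ∘ Tⁿh + Tⁿh ∘ Tⁿd = ∑_{j,k} (D_j H_k + H_k D_j)`. For `j ≠ k` the two
composites agree in every tensor slot except the smaller of `j, k`, where an odd map meets `σ`
in both orders, so the pair cancels. For `j = k` the signs square away and the slot `j` carries
`dh + hd = ip - 1`; the diagonal terms are therefore differences `B_j - B_{j+1}` of the maps
`B_m = 1^{⊗m} ⊗ (ip)^{⊗(n-m)}`, which telescope to `(ip)^{⊗n} - 1`.
-/

open scoped TensorProduct

open Function PiTensorProduct

theorem Finset.sum_mul_sum_add_sum_mul_sum_of_off_diag {R ι : Type*} [NonUnitalNonAssocSemiring R]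
    (s : Finset ι) (a b : ι → R) (h : ∀ j ∈ s, ∀ k ∈ s, j ≠ k → a j * b k + b k * a j = 0) :
    (∑ j ∈ s, a j) * (∑ k ∈ s, b k) + (∑ k ∈ s, b k) * (∑ j ∈ s, a j) =
      ∑ j ∈ s, (a j * b j + b j * a j) := by
  rw [Finset.sum_mul_sum, Finset.sum_mul_sum, Finset.sum_comm (s := s) (t := s)
    (f := fun k j => b k * a j), ← Finset.sum_add_distrib]
  refine Finset.sum_congr rfl fun j hj => ?_
  rw [← Finset.sum_add_distrib, Finset.sum_eq_single j (fun k hk hkj => h j hj k hk hkj.symm)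
    (fun hj' => absurd hj hj')]

theorem commute_mul_of_anticomm {R : Type*} [Ring R] {s a c : R}
    (ha : s * a = -(a * s)) (hc : s * c = -(c * s)) : Commute s (a * c) := by
  rw [Commute, SemiconjBy, ← mul_assoc, ha, neg_mul, mul_assoc, hc, mul_neg, neg_neg, mul_assoc]

section

variable {K V ι : Type*} [CommRing K] [AddCommGroup V] [Module K V]

namespace PiTensorProduct

theorem map_mul_add_map_mul_eq_map_update [DecidableEq ι] {f g : ι → Module.End K V} (j : ι)
    (hcomm : ∀ t ≠ j, f t * g t = g t * f t) :
    map f * map g + map g * map f = map (update (fun t => f t * g t) j (f j * g j + g j * f j)) := by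
  rw [PiTensorProduct.map_update_add, ← PiTensorProduct.map_mul, ← PiTensorProduct.map_mul,
    update_eq_self]
  congr 2
  funext t
  rcases eq_or_ne t j with rfl | ht
  · simp
  · simp [ht, hcomm t ht]

theorem map_update_sub [DecidableEq ι] (f : ι → Module.End K V) (j : ι) (u v : Module.End K V) :
    map (update f j (u - v)) = map (update f j u) - map (update f j v) :=
  (mapMultilinear K _ _).map_update_sub f j u v

theorem map_mul_add_map_mul_eq_zero [DecidableEq ι] {f g : ι → Module.End K V} (j : ι)
    (hj : f j * g j + g j * f j = 0) (hcomm : ∀ t ≠ j, f t * g t = g t * f t) :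
    map f * map g + map g * map f = 0 := by
  rw [map_mul_add_map_mul_eq_map_update j hcomm, hj]
  exact (mapMultilinear K _ _).map_update_zero _ j

end PiTensorProduct

variable [LinearOrder ι]

-- `σ^{⊗j} ⊗ f ⊗ g^{⊗…}`, with `σ` on the first `j` slots providing the Koszul sign.
def koszulSlot (σ f g : Module.End K V) (j : ι) : ι → Module.End K V :=
  fun t => if t < j then σ else if t = j then f else g

variable {σ a b c : Module.End K V}

theorem map_koszulSlot_anticomm_of_ne (hσa : σ * a = -(a * σ)) (hσc : σ * c = -(c * σ))
    (hσb : Commute σ b) (hab : Commute a b) {j k : ι} (hjk : j ≠ k) :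
    map (koszulSlot σ a 1 j) * map (koszulSlot σ c b k) +
      map (koszulSlot σ c b k) * map (koszulSlot σ a 1 j) = 0 := by
  rcases hjk.lt_or_gt with hjk | hkj
  · refine map_mul_add_map_mul_eq_zero j ?_ fun t ht => ?_
    · simp [koszulSlot, hjk, hσa]
    · unfold koszulSlot
      split_ifs <;> first | simp | order
  · refine map_mul_add_map_mul_eq_zero k ?_ fun t ht => ?_
    · simp [koszulSlot, hkj, hσc]
    · unfold koszulSlot
      split_ifs <;> first | simp | order | exact hσb.eq | exact hab.eq

theorem map_koszulSlot_anticomm_self (hσσ : σ * σ = 1) (hac : a * c + c * a = b - 1) (j : ι) :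
    map (koszulSlot σ a 1 j) * map (koszulSlot σ c b j) +
      map (koszulSlot σ c b j) * map (koszulSlot σ a 1 j) =
    map (fun t => if t < j then 1 else b) - map (fun t => if t ≤ j then 1 else b) := by
  rw [map_mul_add_map_mul_eq_map_update j fun t ht => ?_]
  · simp only [koszulSlot, lt_irrefl, if_true, if_false, hac]
    rw [PiTensorProduct.map_update_sub]
    congr 2 <;> funext t <;> simp only [update] <;> split_ifs <;> first | order | simp [*]
  · unfold koszulSlot
    split_ifs <;> simp

theorem sum_map_ite_lt_sub_map_ite_le (n : ℕ) (b : Module.End K V) :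
    ∑ j : Fin n, (map (fun t => if t < j then 1 else b) - map (fun t => if t ≤ j then 1 else b)) =
      map (fun _ => b) - 1 := by
  set B : ℕ → Module.End K (⨂[K] _ : Fin n, V) := fun m => map fun t => if (t : ℕ) < m then 1 else b
  have hB : ∀ j : Fin n, map (fun t => if t < j then 1 else b) -
      map (fun t => if t ≤ j then 1 else b) = B j - B (j + 1) := by
    intro j
    simp only [B, Fin.lt_def, Fin.le_def, Nat.lt_succ_iff]
  rw [Fintype.sum_congr _ _ hB, Fin.sum_univ_eq_sum_range (fun m => B m - B (m + 1)),
    Finset.sum_range_sub']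
  simp [B]

end

theorem stmt_6_general (K V W : Type) [Field K]
    [AddCommGroup V] [Module K V] [AddCommGroup W] [Module K W]
    (n : ℕ) (dV σ h : V →ₗ[K] V) (dW : W →ₗ[K] W) (i : W →ₗ[K] V) (p : V →ₗ[K] W)
    (hchain_i : dV ∘ₗ i = i ∘ₗ dW) (hchain_p : dW ∘ₗ p = p ∘ₗ dV)
    (hip : i ∘ₗ p - LinearMap.id = dV ∘ₗ h + h ∘ₗ dV)
    (hσσ : σ ∘ₗ σ = LinearMap.id)
    (hσd : σ ∘ₗ dV = -(dV ∘ₗ σ)) (hσh : σ ∘ₗ h = -(h ∘ₗ σ)) :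
    (∑ j : Fin n, PiTensorProduct.map
        (fun t : Fin n => if t < j then σ else if t = j then dV else LinearMap.id)) ∘ₗ
      (∑ j : Fin n, PiTensorProduct.map
        (fun t : Fin n => if t < j then σ else if t = j then h else i ∘ₗ p)) +
    (∑ j : Fin n, PiTensorProduct.map
        (fun t : Fin n => if t < j then σ else if t = j then h else i ∘ₗ p)) ∘ₗ
      (∑ j : Fin n, PiTensorProduct.map
        (fun t : Fin n => if t < j then σ else if t = j then dV else LinearMap.id)) =
    PiTensorProduct.map (fun _ : Fin n => i ∘ₗ p) -
      (LinearMap.id : (⨂[K] (_ : Fin n), V) →ₗ[K] ⨂[K] (_ : Fin n), V) := by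
  have hσip : Commute σ (i ∘ₗ p) := by
    rw [sub_eq_iff_eq_add.mp hip]
    exact ((commute_mul_of_anticomm hσd hσh).add_right (commute_mul_of_anticomm hσh hσd)).add_right
      (Commute.one_right σ)
  have hdip : Commute dV (i ∘ₗ p) := by
    change dV ∘ₗ i ∘ₗ p = (i ∘ₗ p) ∘ₗ dV
    rw [← LinearMap.comp_assoc, hchain_i, LinearMap.comp_assoc, hchain_p, LinearMap.comp_assoc]
  change (∑ j, map (koszulSlot σ dV 1 j)) * (∑ j, map (koszulSlot σ h (i ∘ₗ p) j)) +
      (∑ j, map (koszulSlot σ h (i ∘ₗ p) j)) * (∑ j, map (koszulSlot σ dV 1 j)) =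
    map (fun _ => i ∘ₗ p) - 1
  rw [Finset.sum_mul_sum_add_sum_mul_sum_of_off_diag _ _ _ fun j _ k _ hjk =>
      map_koszulSlot_anticomm_of_ne hσd hσh hσip hdip hjk,
    Fintype.sum_congr _ _ (map_koszulSlot_anticomm_self hσσ hip.symm),
    sum_map_ite_lt_sub_map_ite_le]

/-- tensor trick, homotopy identity: given an SDR `(i, p, h)` between
`(V, dV)` and `(W, dW)`, with the Koszul sign rule encoded via the parity operator `σ`
(so the graded map `1^{⊗j} ⊗ d ⊗ 1^{⊗(n-1-j)}` is `σ^{⊗j} ⊗ d ⊗ 1^{⊗(n-1-j)}` since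
`d`, `h` are odd), the tensor-power maps
`Tⁿd = Σⱼ σ^{⊗j} ⊗ dV ⊗ 1^{⊗(n-1-j)}` and `Tⁿh = Σⱼ σ^{⊗j} ⊗ h ⊗ (i∘p)^{⊗(n-1-j)}`
satisfy `Tⁿd ∘ Tⁿh + Tⁿh ∘ Tⁿd = (i∘p)^{⊗n} - 1`. -/
theorem stmt_6 (K V W : Type) [Field K]
    [AddCommGroup V] [Module K V] [AddCommGroup W] [Module K W]
    (n : ℕ) (dV σ h : V →ₗ[K] V) (dW : W →ₗ[K] W) (i : W →ₗ[K] V) (p : V →ₗ[K] W)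
    (hdV : dV ∘ₗ dV = 0) (hdW : dW ∘ₗ dW = 0)
    (hchain_i : dV ∘ₗ i = i ∘ₗ dW) (hchain_p : dW ∘ₗ p = p ∘ₗ dV)
    (hpi : p ∘ₗ i = LinearMap.id)
    (hip : i ∘ₗ p - LinearMap.id = dV ∘ₗ h + h ∘ₗ dV)
    (hhi : h ∘ₗ i = 0) (hph : p ∘ₗ h = 0) (hhh : h ∘ₗ h = 0)
    (hσσ : σ ∘ₗ σ = LinearMap.id)
    (hσd : σ ∘ₗ dV = -(dV ∘ₗ σ)) (hσh : σ ∘ₗ h = -(h ∘ₗ σ)) :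
    (∑ j : Fin n, PiTensorProduct.map
        (fun t : Fin n => if t < j then σ else if t = j then dV else LinearMap.id)) ∘ₗ
      (∑ j : Fin n, PiTensorProduct.map
        (fun t : Fin n => if t < j then σ else if t = j then h else i ∘ₗ p)) +
    (∑ j : Fin n, PiTensorProduct.map
        (fun t : Fin n => if t < j then σ else if t = j then h else i ∘ₗ p)) ∘ₗ
      (∑ j : Fin n, PiTensorProduct.map
        (fun t : Fin n => if t < j then σ else if t = j then dV else LinearMap.id)) =
    PiTensorProduct.map (fun _ : Fin n => i ∘ₗ p) -
      (LinearMap.id : (⨂[K] (_ : Fin n), V) →ₗ[K] ⨂[K] (_ : Fin n), V) :=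
  stmt_6_general K V W n dV σ h dW i p hchain_i hchain_p hip hσσ hσd hσh
end
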